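/- Let N ≥ 2 and let x ∈ ℂ^N satisfy x[n] ≠ 0 for all n = 2,…,N−1. If y ∈ ℂ^N is such that the Hermitian matrix X = x y* + y x* satisfies trace(φ_{m,n} φ_{m,n}* · X) = 0 for all m = 1,…,4 and n = 1,…,N−1, then X = 0. (Theorem 6, part 1: the restriction of A_Φ to the tangent space T_x = {x y* + y x* : y ∈ ℂ^N} is injective for every x ∈ S_Φ.) -/

import Mathlib

open Complex Matrix MeasureTheory

noncomputable section

/-- α = √((1 − 1/√3)/2) -/
def alph : ℂ := (Real.sqrt ((1 - 1/Real.sqrt 3)/2) : ℝ)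

/-- β = e^{i5π/4}·√((1 + 1/√3)/2) -/
def beta : ℂ := Complex.exp (Complex.I * (5 * (Real.pi : ℂ) / 4)) *
  (Real.sqrt ((1 + 1/Real.sqrt 3)/2) : ℝ)

/-- the four frame vectors a₁ = (α,β), a₂ = (β,α), a₃ = (α,−β), a₄ = (−β,α) in ℂ² -/
def coef : Fin 4 → Fin 2 → ℂ := ![![alph, beta], ![beta, alph], ![alph, -beta], ![-beta, alph]]

/-- inner product ⟨x,y⟩ = Σ x[n]·conj(y[n]) -/
def inn {N : ℕ} (x y : Fin N → ℂ) : ℂ := ∑ i, x i * (starRingEnd ℂ) (y i)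

/-- Euclidean norm ‖x‖ = √⟨x,x⟩ -/
def nrm {N : ℕ} (x : Fin N → ℂ) : ℝ := Real.sqrt (inn x x).re

/-- outer product x y* -/
def outer {N : ℕ} (x y : Fin N → ℂ) : Matrix (Fin N) (Fin N) ℂ :=
  fun i j => x i * (starRingEnd ℂ) (y j)

/-- measurement vectors φ_{m,n} (0-based n: nonzero entries at positions n and n+1) -/
def phiv (N : ℕ) (m : Fin 4) (n : ℕ) : Fin N → ℂ :=
  fun i => if (i : ℕ) = n then coef m 0 else if (i : ℕ) = n + 1 then coef m 1 else 0

/-- measurement vectors ψ_{m,n} (0-based n: nonzero entries at positions 0 and n+1) -/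
def psiv (N : ℕ) (m : Fin 4) (n : ℕ) : Fin N → ℂ :=
  fun i => if (i : ℕ) = 0 then coef m 0 else if (i : ℕ) = n + 1 then coef m 1 else 0

/-- Hilbert–Schmidt inner product ⟨X,Y⟩ = trace(Y*X) -/
def hs {N : ℕ} (X Y : Matrix (Fin N) (Fin N) ℂ) : ℂ := Matrix.trace (Yᴴ * X)

/-- Frobenius (Hilbert–Schmidt) norm -/
def frob {N : ℕ} (X : Matrix (Fin N) (Fin N) ℂ) : ℝ := Real.sqrt (Matrix.trace (Xᴴ * X)).re

/-- spectral norm (largest singular value) -/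
def specNorm {N : ℕ} (A : Matrix (Fin N) (Fin N) ℂ) : ℝ :=
  sSup {r : ℝ | ∃ v : Fin N → ℂ, nrm v ≤ 1 ∧ r = nrm (A.mulVec v)}

/-!
Since `trace (φ φ* X) = φ* X φ` and `φ_{m,n}` is supported on the coordinates `n, n + 1`, the
four measurements at `n` are the quadratic forms of the `2 × 2` block of `X` at `(n, n + 1)` on
the frame `(α, β), (β, α), (α, -β), (-β, α)`. Their sums and differences determine the block,
because `|α| ≠ |β|` and `(ᾱ β)²` is not real. Hence `X = x y* + y x*` vanishes on the tridiagonal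
band, which for `N = 2` is everything. For `N ≥ 3`, at an interior index `p` the equation
`X_{pp} = 0` gives `y_p = c x_p` with `c` purely imaginary, and `X_{k,k+1} = 0` with `x_k ≠ 0`
propagates `y_k = c x_k` to every index; then `X = (c̄ + c) x x* = 0`.
-/

open ComplexConjugate

theorem trace_outer_self_mul {N : ℕ} (u : Fin N → ℂ) (X : Matrix (Fin N) (Fin N) ℂ) :
    trace (outer u u * X) = star u ⬝ᵥ X *ᵥ u := by
  change trace (vecMulVec u (star u) * X) = _
  rw [vecMulVec_mul, trace_vecMulVec, dotProduct_comm, dotProduct_mulVec]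

theorem dotProduct_mulVec_submatrix {ι κ R : Type*} [Fintype ι] [Fintype κ]
    [NonUnitalNonAssocSemiring R] [StarRing R] (e : ι → κ) (he : Function.Injective e) (u : κ → R)
    (hu : ∀ k ∉ Set.range e, u k = 0) (X : Matrix κ κ R) :
    star u ⬝ᵥ X *ᵥ u = star (u ∘ e) ⬝ᵥ X.submatrix e e *ᵥ (u ∘ e) := by
  symm
  refine Fintype.sum_of_injective e he _ _ (fun k hk => by simp [hu k hk]) fun i => ?_
  simp only [Pi.star_apply, Function.comp_apply, mulVec, dotProduct, submatrix_apply]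
  congr 1
  exact Fintype.sum_of_injective e he _ _ (fun k hk => by simp [hu k hk]) fun _ => rfl

theorem eq_zero_of_frame_quadForm {a b : ℂ} (hab : normSq a ≠ normSq b)
    (hw : (star a * b) ^ 2 ≠ (star b * a) ^ 2) (B : Matrix (Fin 2) (Fin 2) ℂ)
    (h₁ : star ![a, b] ⬝ᵥ B *ᵥ ![a, b] = 0) (h₂ : star ![b, a] ⬝ᵥ B *ᵥ ![b, a] = 0)
    (h₃ : star ![a, -b] ⬝ᵥ B *ᵥ ![a, -b] = 0) (h₄ : star ![-b, a] ⬝ᵥ B *ᵥ ![-b, a] = 0) :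
    B = 0 := by
  simp only [dotProduct, mulVec, Fin.sum_univ_two, Pi.star_apply, Matrix.cons_val_zero,
    Matrix.cons_val_one, star_neg] at h₁ h₂ h₃ h₄
  have hw' : (star a * b) ^ 2 - (star b * a) ^ 2 ≠ 0 := sub_ne_zero.mpr hw
  have hpq : (star a * a) ^ 2 - (star b * b) ^ 2 ≠ 0 := by
    have hp : star a * a = (normSq a : ℂ) := normSq_eq_conj_mul_self.symm
    have hq : star b * b = (normSq b : ℂ) := normSq_eq_conj_mul_self.symm
    rw [hp, hq, sq_sub_sq, ← ofReal_add, ← ofReal_sub, ← ofReal_mul, ofReal_ne_zero]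
    refine mul_ne_zero (fun h => hab ?_) (sub_ne_zero.mpr hab)
    linarith [normSq_nonneg a, normSq_nonneg b]
  have h00 : ((star a * a) ^ 2 - (star b * b) ^ 2) * B 0 0 = 0 := by
    linear_combination (star a * a * (h₁ + h₃) - star b * b * (h₂ + h₄)) / 2
  have h11 : ((star a * a) ^ 2 - (star b * b) ^ 2) * B 1 1 = 0 := by
    linear_combination (star a * a * (h₂ + h₄) - star b * b * (h₁ + h₃)) / 2
  have h01 : ((star a * b) ^ 2 - (star b * a) ^ 2) * B 0 1 = 0 := by
    linear_combination (star a * b * (h₁ - h₃) - star b * a * (h₂ - h₄)) / 2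
  have h10 : ((star a * b) ^ 2 - (star b * a) ^ 2) * B 1 0 = 0 := by
    linear_combination (star a * b * (h₂ - h₄) - star b * a * (h₁ - h₃)) / 2
  ext i j
  fin_cases i <;> fin_cases j
  · exact (mul_eq_zero.mp h00).resolve_left hpq
  · exact (mul_eq_zero.mp h01).resolve_left hw'
  · exact (mul_eq_zero.mp h10).resolve_left hw'
  · exact (mul_eq_zero.mp h11).resolve_left hpq

theorem beta_eq : beta =
    -((Real.sqrt 2 / 2 * Real.sqrt ((1 + 1 / Real.sqrt 3) / 2) : ℝ) : ℂ) * (1 + I) := by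
  have h : I * (5 * (Real.pi : ℂ) / 4) = ((Real.pi / 4 + Real.pi : ℝ) : ℂ) * I := by
    push_cast; ring
  rw [beta, h, exp_mul_I, ← ofReal_cos, ← ofReal_sin, Real.cos_add_pi, Real.sin_add_pi,
    Real.cos_pi_div_four, Real.sin_pi_div_four]
  push_cast
  ring

theorem one_div_sqrt_three_lt_one : 1 / Real.sqrt 3 < 1 := by
  rw [div_lt_one (by positivity), Real.lt_sqrt zero_le_one]
  norm_num

theorem normSq_alph : normSq alph = (1 - 1 / Real.sqrt 3) / 2 := by
  rw [alph, normSq_ofReal, Real.mul_self_sqrt]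
  linarith [one_div_sqrt_three_lt_one]

theorem normSq_beta : normSq beta = (1 + 1 / Real.sqrt 3) / 2 := by
  have h2 : Real.sqrt 2 ^ 2 = 2 := Real.sq_sqrt zero_le_two
  have hs : Real.sqrt ((1 + 1 / Real.sqrt 3) / 2) ^ 2 = (1 + 1 / Real.sqrt 3) / 2 :=
    Real.sq_sqrt (by positivity)
  have hI : normSq (1 + I) = 2 := by norm_num [normSq_apply]
  rw [beta_eq, normSq_mul, normSq_neg, normSq_ofReal, hI]
  linear_combination (Real.sqrt ((1 + 1 / Real.sqrt 3) / 2) ^ 2 / 2) * h2 + hs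

theorem normSq_alph_ne_normSq_beta : normSq alph ≠ normSq beta := by
  rw [normSq_alph, normSq_beta]
  linarith [show 0 < 1 / Real.sqrt 3 by positivity]

theorem sq_star_alph_mul_beta_ne : (star alph * beta) ^ 2 ≠ (star beta * alph) ^ 2 := by
  set r := Real.sqrt 2 / 2 * Real.sqrt ((1 + 1 / Real.sqrt 3) / 2)
  have hr : r ≠ 0 := by positivity
  have ha : alph ≠ 0 := by
    rw [← normSq_pos, normSq_alph]
    linarith [one_div_sqrt_three_lt_one]
  have hstar : star alph = alph := conj_ofReal _
  rw [hstar, beta_eq]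
  intro h
  have : (4 * alph ^ 2 * (r : ℂ) ^ 2) * I = 0 := by
    simp only [star_mul', star_neg, star_add, star_one, Complex.star_def, conj_ofReal, conj_I] at h
    linear_combination h
  simp [ha, hr, I_ne_zero] at this

def adjPair (N n : ℕ) (h : n + 1 < N) : Fin 2 → Fin N := fun k => ⟨n + k, by omega⟩

theorem adjPair_injective {N n : ℕ} (h : n + 1 < N) : Function.Injective (adjPair N n h) :=
  fun k l hkl => Fin.ext (by simpa [adjPair] using hkl)

theorem phiv_comp_adjPair {N n : ℕ} (h : n + 1 < N) (m : Fin 4) :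
    phiv N m n ∘ adjPair N n h = coef m := by
  ext k
  fin_cases k <;> simp [phiv, adjPair]

theorem phiv_eq_zero_of_notMem_range {N n : ℕ} (h : n + 1 < N) (m : Fin 4) (i : Fin N)
    (hi : i ∉ Set.range (adjPair N n h)) : phiv N m n i = 0 := by
  have h0 : (i : ℕ) ≠ n := fun hn => hi ⟨0, Fin.ext (by simp [adjPair, hn])⟩
  have h1 : (i : ℕ) ≠ n + 1 := fun hn => hi ⟨1, Fin.ext (by simp [adjPair, hn])⟩
  simp [phiv, h0, h1]

theorem submatrix_adjPair_eq_zero {N n : ℕ} (h : n + 1 < N) (X : Matrix (Fin N) (Fin N) ℂ)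
    (hX : ∀ m, trace (outer (phiv N m n) (phiv N m n) * X) = 0) :
    X.submatrix (adjPair N n h) (adjPair N n h) = 0 := by
  have hq : ∀ m,
      star (coef m) ⬝ᵥ X.submatrix (adjPair N n h) (adjPair N n h) *ᵥ coef m = 0 := by
    intro m
    rw [← hX m, trace_outer_self_mul, dotProduct_mulVec_submatrix _ (adjPair_injective h) _
      (phiv_eq_zero_of_notMem_range h m), phiv_comp_adjPair]
  exact eq_zero_of_frame_quadForm normSq_alph_ne_normSq_beta sq_star_alph_mul_beta_ne _
    (hq 0) (hq 1) (hq 2) (hq 3)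

theorem apply_eq_zero_of_trace_phiv {N : ℕ} (hN : 2 ≤ N) (X : Matrix (Fin N) (Fin N) ℂ)
    (hX : ∀ (m : Fin 4) (n : ℕ), n + 1 < N → trace (outer (phiv N m n) (phiv N m n) * X) = 0)
    (i j : Fin N) (hij : (i : ℕ) ≤ j + 1) (hji : (j : ℕ) ≤ i + 1) : X i j = 0 := by
  set n := min (min (i : ℕ) j) (N - 2)
  have hn : n + 1 < N := by omega
  have hrange : ∀ k : Fin N, n ≤ k → (k : ℕ) ≤ n + 1 → k ∈ Set.range (adjPair N n hn) :=
    fun k hnk hkn => ⟨if (k : ℕ) = n then 0 else 1,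
      Fin.ext (by split_ifs <;> simp [adjPair] <;> omega)⟩
  obtain ⟨k, hk⟩ := hrange i (by omega) (by omega)
  obtain ⟨l, hl⟩ := hrange j (by omega) (by omega)
  rw [← hk, ← hl]
  exact congrFun (congrFun (submatrix_adjPair_eq_zero hn X (fun m => hX m n hn)) k) l

section TangentVector

variable {N : ℕ} {x y : Fin N → ℂ} {c : ℂ}

theorem outer_add_outer_apply (i j : Fin N) :
    (outer x y + outer y x) i j = x i * conj (y j) + y i * conj (x j) := rfl

theorem exists_eq_mul_of_outer_add_outer_apply_self {i : Fin N}
    (h : (outer x y + outer y x) i i = 0) (hx : x i ≠ 0) : ∃ c, conj c = -c ∧ y i = c * x i := by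
  have hcx : conj (x i) ≠ 0 := (map_ne_zero _).mpr hx
  refine ⟨y i / x i, ?_, (div_mul_cancel₀ _ hx).symm⟩
  rw [outer_add_outer_apply] at h
  rw [map_div₀, div_eq_iff hcx]
  field_simp
  linear_combination h

theorem eq_mul_of_outer_add_outer_apply (hc : conj c = -c) {i j : Fin N}
    (h : (outer x y + outer y x) i j = 0) (hx : x i ≠ 0) (hy : y i = c * x i) :
    y j = c * x j := by
  rw [outer_add_outer_apply, hy] at h
  have hconj : conj (y j) = conj (c * x j) := by
    rw [map_mul, hc]
    exact mul_left_cancel₀ hx (by linear_combination h)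
  exact (RingHom.injective _) hconj

theorem outer_add_outer_eq_zero (hc : conj c = -c) (hy : ∀ i, y i = c * x i) :
    outer x y + outer y x = 0 := by
  ext i j
  rw [outer_add_outer_apply, hy, hy, map_mul, hc, Matrix.zero_apply]
  ring

theorem exists_eq_mul_of_outer_add_outer_band (hN : 3 ≤ N)
    (hx : ∀ i : Fin N, 0 < (i : ℕ) → (i : ℕ) < N - 1 → x i ≠ 0)
    (hband : ∀ i j : Fin N, (i : ℕ) ≤ j + 1 → (j : ℕ) ≤ i + 1 →
      (outer x y + outer y x) i j = 0) :
    ∃ c, conj c = -c ∧ ∀ i, y i = c * x i := by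
  let p : Fin N := ⟨1, by omega⟩
  have hp1 : (p : ℕ) = 1 := rfl
  have hxp : x p ≠ 0 := hx p (by omega) (by omega)
  obtain ⟨c, hc, hp⟩ :=
    exists_eq_mul_of_outer_add_outer_apply_self (hband p p (by omega) (by omega)) hxp
  have hup : ∀ k, 1 ≤ k → ∀ hk : k < N, y ⟨k, hk⟩ = c * x ⟨k, hk⟩ := by
    intro k hk1
    induction k, hk1 using Nat.le_induction with
    | base => exact fun _ => hp
    | succ k hk1 ih =>
      intro hk
      exact eq_mul_of_outer_add_outer_apply hc
        (hband ⟨k, by omega⟩ ⟨k + 1, hk⟩ (by simp; omega) (by simp))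
        (hx _ (by simp; omega) (by simp; omega)) (ih _)
  refine ⟨c, hc, fun ⟨k, hk⟩ => ?_⟩
  rcases k with _ | k
  · exact eq_mul_of_outer_add_outer_apply hc
      (hband p ⟨0, hk⟩ (by simp [hp1]) (by simp [hp1])) hxp hp
  · exact hup (k + 1) (by omega) hk

end TangentVector

/-- Theorem 6 (part 1): for x ∈ S_Φ the restriction of A_Φ to the tangent space
T_x = {xy* + yx* : y ∈ ℂ^N} is injective. -/
theorem tangent_injective_Phi (N : ℕ) (hN : 2 ≤ N) (x : Fin N → ℂ)
    (hx : ∀ i : Fin N, 0 < (i : ℕ) → (i : ℕ) < N - 1 → x i ≠ 0) (y : Fin N → ℂ)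
    (hker : ∀ (m : Fin 4) (n : ℕ), n + 1 < N →
      Matrix.trace (outer (phiv N m n) (phiv N m n) * (outer x y + outer y x)) = 0) :
    outer x y + outer y x = 0 := by
  have hband := apply_eq_zero_of_trace_phiv hN _ hker
  rcases (by omega : N = 2 ∨ 3 ≤ N) with rfl | hN3
  · ext i j
    exact hband i j (by omega) (by omega)
  · obtain ⟨c, hc, hy⟩ := exists_eq_mul_of_outer_add_outer_band hN3 hx hband
    exact outer_add_outer_eq_zero hc hy
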